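/- arXiv:1803.02703 — 2 statements merged into one kernel-verified Lean document; each statement's English description precedes it below -/
import Mathlib

section
/- Let G be a graph with a tight tree-decomposition (T, (V_t)). Then for every t ∈ T, the torso at t is ℓ-chordal whenever G is ℓ-chordal: every induced cycle C of the torso at t lifts to an induced cycle C' of G with |C'| ≥ |C|, obtained by replacing each edge of C not in G by a path through an adjacent part of the decomposition. -/
open SimpleGraph

/-- `(T, bag)` is a tree-decomposition of `G`. -/
def IsTreeDecomp {V ι : Type} (G : SimpleGraph V) (T : SimpleGraph ι)
    (bag : ι → Finset V) : Prop :=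
  T.IsTree ∧
  (∀ v : V, ∃ i, v ∈ bag i) ∧
  (∀ u v : V, G.Adj u v → ∃ i, u ∈ bag i ∧ v ∈ bag i) ∧
  (∀ v : V, (T.induce {i | v ∈ bag i}).Connected)

/-- The side of the separation induced by the edge `ij` of `T` that contains
the bags of the component of `T - ij` containing `i`. -/
def decompSide {V ι : Type} (T : SimpleGraph ι) (bag : ι → Finset V)
    (i j : ι) : Set V :=
  {v | ∃ u : ι, v ∈ bag u ∧ (T.deleteEdges {s(i, j)}).Reachable u i}

/-- Tightness of a tree-decomposition: across every edge of `T`, any two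
vertices of the adhesion set are joined, on both sides, by a path with no
internal vertex in the adhesion set. -/
def IsTightDecomp {V ι : Type} (G : SimpleGraph V) (T : SimpleGraph ι)
    (bag : ι → Finset V) : Prop :=
  ∀ i j : ι, T.Adj i j → ∀ x y : V,
    x ∈ bag i → x ∈ bag j → y ∈ bag i → y ∈ bag j → x ≠ y →
    (∃ P : G.Walk x y, P.IsPath ∧ (∀ v ∈ P.support, v ∈ decompSide T bag i j) ∧
      ∀ v ∈ P.support, v ≠ x → v ≠ y → ¬(v ∈ bag i ∧ v ∈ bag j)) ∧
    (∃ P : G.Walk x y, P.IsPath ∧ (∀ v ∈ P.support, v ∈ decompSide T bag j i) ∧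
      ∀ v ∈ P.support, v ≠ x → v ≠ y → ¬(v ∈ bag i ∧ v ∈ bag j))

/-- The torso of a tree-decomposition at `t`: the induced subgraph on the bag
of `t`, with every adhesion set with a neighbouring bag made complete. -/
def torso {V ι : Type} (G : SimpleGraph V) (T : SimpleGraph ι)
    (bag : ι → Finset V) (t : ι) : SimpleGraph {v : V // v ∈ bag t} where
  Adj a b := a ≠ b ∧
    (G.Adj a.1 b.1 ∨ ∃ s : ι, T.Adj s t ∧ a.1 ∈ bag s ∧ b.1 ∈ bag s)
  symm := by
    constructor
    rintro a b ⟨hne, h | ⟨s, hs, ha, hb⟩⟩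
    · exact ⟨hne.symm, Or.inl h.symm⟩
    · exact ⟨hne.symm, Or.inr ⟨s, hs, hb, ha⟩⟩
  loopless := by constructor; rintro a ⟨hne, -⟩; exact hne rfl

/-- A walk is chordless (induced). -/
def WalkInduced {V : Type} {G : SimpleGraph V} {u v : V} (W : G.Walk u v) : Prop :=
  ∀ a b : V, a ∈ W.support → b ∈ W.support → G.Adj a b → s(a, b) ∈ W.edges

/-!
Replace every edge `ab` of an induced cycle `C` of the torso at `t` by a chordless `a`–`b` path of
`G`: the edge itself if `ab ∈ G`, and otherwise a path on the side of a neighbour `s` of `t` with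
`a, b ∈ V_s`, which tightness provides with all inner vertices outside `V_t`. Since `C` is induced
of length at least 4, it has at most two vertices in `V_s` (three would span a triangle of `C`),
and vertices outside `V_t` lying on the sides of distinct neighbours of `t` share no bag. So inner
vertices of distinct replacement paths are distinct and non-adjacent, and the concatenation is an
induced cycle of `G` at least as long as `C`.
-/

namespace SimpleGraph.Walk

variable {V : Type} {G : SimpleGraph V}

lemma IsPath.start_notMem_support_tail {u v : V} {p : G.Walk u v} (hp : p.IsPath) :
    u ∉ p.support.tail := by
  have hnd := hp.support_nodup
  rw [← p.cons_tail_support, List.nodup_cons] at hnd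
  exact hnd.1

lemma IsPath.append {u v w : V} {p : G.Walk u v} {q : G.Walk v w} (hp : p.IsPath)
    (hq : q.IsPath) (h : ∀ x ∈ p.support, x ∈ q.support → x = v) : (p.append q).IsPath := by
  rw [isPath_def, support_append, List.nodup_append]
  refine ⟨hp.support_nodup, hq.support_nodup.sublist (List.tail_sublist _), ?_⟩
  rintro x hxp _ hxq rfl
  obtain rfl := h x hxp (List.mem_of_mem_tail hxq)
  exact hq.start_notMem_support_tail hxq

lemma IsCycle.length_eq_three_of_mem_edges [DecidableEq V] {u a b c : V} {C : G.Walk u u}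
    (hC : C.IsCycle) (hab : s(a, b) ∈ C.edges) (hac : s(a, c) ∈ C.edges)
    (hbc : s(b, c) ∈ C.edges) : C.length = 3 := by
  have ha : a ∈ C.support := C.fst_mem_support_of_mem_edges hab
  have hedges : ∀ e, e ∈ (C.rotate a ha).edges ↔ e ∈ C.edges :=
    fun e => (C.rotate_edges a ha).mem_iff
  rw [← C.length_rotate a ha]
  have hD := hC.rotate ha
  generalize C.rotate a ha = D at hD hedges
  cases D with
  | nil => exact absurd hD not_isCycle_nil
  | @cons _ x _ hax q =>
    obtain ⟨hq, -⟩ := (cons_isCycle_iff q hax).mp hD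
    have hnbr : ∀ y, s(a, y) ∈ C.edges → y = x ∨ y = q.penultimate := by
      intro y hy
      rcases List.mem_cons.mp ((hedges _).mpr hy) with hy | hy
      · left; simpa [hax.ne] using hy
      · exact Or.inr (hq.eq_penultimate_of_mem_edges hy)
    wlog hb : b = x generalizing b c
    · have hc : c = x := by
        have := (C.adj_of_mem_edges hbc).ne
        grind
      exact this hac hab (Sym2.eq_swap ▸ hbc) hc
    subst hb
    have hc : c = q.penultimate := by
      have := (C.adj_of_mem_edges hbc).ne
      grind
    have hcq : c = q.snd := by
      have hca : c ≠ a := (C.adj_of_mem_edges hac).ne.symm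
      rcases List.mem_cons.mp ((hedges _).mpr hbc) with h | h
      · simp [hca] at h
        exact absurd h.1.symm hax.ne
      · exact hq.eq_snd_of_mem_edges h
    have hlen : 1 ≤ q.length := by
      rcases q with _ | _
      · exact absurd rfl hax.ne
      · simp
    have : 1 = q.length - 1 :=
      hq.getVert_injOn (by simpa using hlen) (by simp) (hcq.symm.trans hc)
    simp only [length_cons]
    omega

lemma isChordless_of_forall_length_le {u v : V} {S : Set V} {p : G.Walk u v}
    (hpS : ∀ w ∈ p.support, w ∈ S)
    (hmin : ∀ q : G.Walk u v, (∀ w ∈ q.support, w ∈ S) → p.length ≤ q.length) :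
    p.IsChordless := by
  rw [isChordless_iff_forall_mem_edges]
  intro a b ha hb hab
  obtain ⟨i, rfl, hi⟩ := mem_support_iff_exists_getVert.mp ha
  obtain ⟨j, rfl, hj⟩ := mem_support_iff_exists_getVert.mp hb
  clear ha hb
  wlog hij : i < j generalizing i j
  · have hji : j < i := lt_of_le_of_ne (not_lt.mp hij) fun h => hab.ne (h ▸ rfl)
    exact Sym2.eq_swap ▸ this j hj i hi hab.symm hji
  by_cases hji : j = i + 1
  · subst hji
    exact (mk_mem_edges_iff_exists p).mpr ⟨i, by omega, rfl⟩
  -- The chord skips a vertex of `p`, so shortcutting along it gives a shorter walk.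
  · set q := (p.take i).append (cons hab (p.drop j))
    have hqS : ∀ w ∈ q.support, w ∈ S := by
      intro w hw
      simp only [q, support_append, support_cons, List.tail_cons, List.mem_append] at hw
      rcases hw with hw | hw
      · exact hpS w ((p.isSubwalk_take i).support_subset hw)
      · exact hpS w ((p.isSubwalk_drop j).support_subset hw)
    have hq := hmin q hqS
    simp only [q, length_append, length_cons, take_length, drop_length] at hq
    omega

lemma exists_isPath_isChordless_support_subset {u v : V} (p : G.Walk u v) :
    ∃ q : G.Walk u v, q.IsPath ∧ q.IsChordless ∧ ∀ w ∈ q.support, w ∈ p.support := by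
  classical
  have hex : ∃ n, ∃ q : G.Walk u v, (∀ w ∈ q.support, w ∈ p.support) ∧ q.length = n :=
    ⟨_, p, fun _ h => h, rfl⟩
  obtain ⟨q, hqS, hqlen⟩ := Nat.find_spec hex
  have hmin : ∀ r : G.Walk u v, (∀ w ∈ r.support, w ∈ p.support) → q.length ≤ r.length :=
    fun r hr => hqlen ▸ Nat.find_min' hex ⟨r, hr, rfl⟩
  have hbS : ∀ w ∈ q.bypass.support, w ∈ p.support :=
    fun w hw => hqS w (q.support_bypass_subset_support hw)
  exact ⟨q.bypass, q.bypass_isPath,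
    isChordless_of_forall_length_le (S := {w | w ∈ p.support}) hbS
      fun r hr => q.length_bypass_le_length.trans (hmin r hr), hbS⟩

section bind

variable {W : Type} {H : SimpleGraph W} {f : W → V} (R : ∀ a b, H.Adj a b → G.Walk (f a) (f b))

def bind : ∀ {a b : W}, H.Walk a b → G.Walk (f a) (f b)
  | _, _, nil => nil
  | _, _, cons h p => (R _ _ h).append (bind p)

@[simp] lemma bind_nil {a : W} : (nil : H.Walk a a).bind R = nil := rfl

@[simp] lemma bind_cons {a b c : W} (h : H.Adj a b) (p : H.Walk b c) :
    (cons h p).bind R = (R a b h).append (p.bind R) := rfl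

variable {R}

lemma length_le_length_bind (hf : f.Injective) {a b : W} (p : H.Walk a b) :
    p.length ≤ (p.bind R).length := by
  induction p with
  | nil => simp
  | cons h p ih =>
    have : (R _ _ h).length ≠ 0 := fun h0 => h.ne (hf (eq_of_length_eq_zero h0))
    simp only [bind_cons, length_append, length_cons]
    omega

lemma mem_support_bind {a b : W} {p : H.Walk a b} {v : V} (hv : v ∈ (p.bind R).support) :
    v = f a ∨ ∃ d ∈ p.darts, v ∈ (R _ _ d.adj).support := by
  induction p with
  | nil => simpa using hv
  | cons h p ih =>
    rw [bind_cons, mem_support_append_iff] at hv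
    refine .inr ?_
    rcases hv with hv | hv
    · exact ⟨_, List.mem_cons_self .., hv⟩
    · rcases ih hv with rfl | ⟨d, hd, hv⟩
      · exact ⟨_, List.mem_cons_self .., end_mem_support _⟩
      · exact ⟨d, List.mem_cons_of_mem _ hd, hv⟩

lemma edges_subset_edges_bind {a b : W} {p : H.Walk a b} {d : H.Dart} (hd : d ∈ p.darts) :
    (R _ _ d.adj).edges ⊆ (p.bind R).edges := by
  induction p with
  | nil => simp at hd
  | cons h p ih =>
    rw [bind_cons, edges_append]
    rcases List.mem_cons.mp hd with rfl | hd
    · exact List.subset_append_left _ _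
    · exact List.Subset.trans (ih hd) (List.subset_append_right _ _)

end bind

end SimpleGraph.Walk

lemma walkInduced_iff_isChordless {V : Type} {G : SimpleGraph V} {u v : V} (p : G.Walk u v) :
    WalkInduced p ↔ p.IsChordless :=
  Walk.isChordless_iff_forall_mem_edges.symm

lemma SimpleGraph.IsAcyclic.not_reachable_deleteEdges {ι : Type} {T : SimpleGraph ι}
    (hT : T.IsAcyclic) {s t : ι} (hst : T.Adj s t) : ¬ (T.deleteEdges {s(s, t)}).Reachable s t :=
  isBridge_iff.mp (isAcyclic_iff_forall_adj_isBridge.mp hT hst)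

lemma SimpleGraph.IsAcyclic.eq_of_reachable_deleteEdges {ι : Type} {T : SimpleGraph ι}
    (hT : T.IsAcyclic) {s s' t i : ι} (hst : T.Adj s t) (hs't : T.Adj s' t)
    (h : (T.deleteEdges {s(s, t)}).Reachable i s)
    (h' : (T.deleteEdges {s(s', t)}).Reachable i s') : s = s' := by
  classical
  by_contra hne
  obtain ⟨W, hW⟩ := reachable_deleteEdges_iff_exists_walk.mp h'
  -- `W` avoids `t`, hence the edge `st`, so `s`, `i`, `s'`, `t` are connected without `st`.
  have htW : t ∉ W.support := fun ht => hT.not_reachable_deleteEdges hs't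
    (reachable_deleteEdges_iff_exists_walk.mpr
      ⟨W.dropUntil t ht, fun he => hW (W.edges_dropUntil_subset_edges ht he)⟩).symm
  have hiS' : (T.deleteEdges {s(s, t)}).Reachable i s' :=
    reachable_deleteEdges_iff_exists_walk.mpr
      ⟨W, fun he => htW (W.snd_mem_support_of_mem_edges he)⟩
  have hs't' : (T.deleteEdges {s(s, t)}).Adj s' t := by simp [hs't, hs't.ne, Ne.symm hne]
  exact hT.not_reachable_deleteEdges hst (h.symm.trans (hiS'.trans hs't'.reachable))

namespace IsTreeDecomp

variable {V ι : Type} {G : SimpleGraph V} {T : SimpleGraph ι} {bag : ι → Finset V}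

lemma exists_walk_forall_mem_bag (hdec : IsTreeDecomp G T bag) {v : V} {i j : ι}
    (hi : v ∈ bag i) (hj : v ∈ bag j) : ∃ W : T.Walk i j, ∀ k ∈ W.support, v ∈ bag k := by
  obtain ⟨W⟩ := (hdec.2.2.2 v).preconnected ⟨i, hi⟩ ⟨j, hj⟩
  refine ⟨W.map (Embedding.induce {i | v ∈ bag i}).toHom, fun k hk => ?_⟩
  obtain ⟨⟨k', hk'⟩, -, rfl⟩ := List.mem_map.mp ((W.support_map _).symm ▸ hk :)
  exact hk'

lemma reachable_deleteEdges_of_mem_bag (hdec : IsTreeDecomp G T bag) {v : V} {i j s t : ι}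
    (hi : v ∈ bag i) (hj : v ∈ bag j) (ht : v ∉ bag t) :
    (T.deleteEdges {s(s, t)}).Reachable i j := by
  obtain ⟨W, hW⟩ := hdec.exists_walk_forall_mem_bag hi hj
  exact reachable_deleteEdges_iff_exists_walk.mpr
    ⟨W, fun he => ht (hW t (W.snd_mem_support_of_mem_edges he))⟩

lemma mem_bag_of_reachable_deleteEdges (hdec : IsTreeDecomp G T bag) {v : V} {i s t : ι}
    (hst : T.Adj s t) (hr : (T.deleteEdges {s(s, t)}).Reachable i s) (hi : v ∈ bag i)
    (ht : v ∈ bag t) : v ∈ bag s := by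
  obtain ⟨W, hW⟩ := hdec.exists_walk_forall_mem_bag hi ht
  refine hW s (by_contra fun hs =>
    hdec.1.isAcyclic.not_reachable_deleteEdges hst (hr.symm.trans ?_))
  exact reachable_deleteEdges_iff_exists_walk.mpr
    ⟨W, fun he => hs (W.fst_mem_support_of_mem_edges he)⟩

lemma mem_bag_of_mem_decompSide (hdec : IsTreeDecomp G T bag) {v : V} {s t : ι}
    (hst : T.Adj s t) (hv : v ∈ decompSide T bag s t) (ht : v ∈ bag t) : v ∈ bag s := by
  obtain ⟨i, hi, hr⟩ := hv
  exact hdec.mem_bag_of_reachable_deleteEdges hst hr hi ht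

lemma reachable_of_mem_decompSide (hdec : IsTreeDecomp G T bag) {v : V} {i s t : ι}
    (hv : v ∈ decompSide T bag s t) (ht : v ∉ bag t) (hi : v ∈ bag i) :
    (T.deleteEdges {s(s, t)}).Reachable i s := by
  obtain ⟨j, hj, hr⟩ := hv
  exact (hdec.reachable_deleteEdges_of_mem_bag hi hj ht).trans hr

end IsTreeDecomp

section torso

open Walk

variable {V ι : Type} {G : SimpleGraph V} {T : SimpleGraph ι} {bag : ι → Finset V} {t : ι}

structure IsTorsoEdgeLift (T : SimpleGraph ι) (bag : ι → Finset V) {a b : {v // v ∈ bag t}}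
    (P : G.Walk a.1 b.1) : Prop where
  isPath : P.IsPath
  isChordless : P.IsChordless
  eq_or_eq_of_mem_bag : ∀ v ∈ P.support, v ∈ bag t → v = a.1 ∨ v = b.1
  exists_decompSide : ∀ v ∈ P.support, v ∉ bag t →
    ∃ s, T.Adj s t ∧ a.1 ∈ bag s ∧ b.1 ∈ bag s ∧ v ∈ decompSide T bag s t

lemma IsTreeDecomp.exists_isTorsoEdgeLift (hdec : IsTreeDecomp G T bag)
    (htight : IsTightDecomp G T bag)
    {a b : {v // v ∈ bag t}} (h : (torso G T bag t).Adj a b) :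
    ∃ P : G.Walk a.1 b.1, IsTorsoEdgeLift T bag P := by
  obtain ⟨hne, hab | ⟨s, hst, has, hbs⟩⟩ := h
  · have hsupp : ∀ v ∈ hab.toWalk.support, v = a.1 ∨ v = b.1 := by simp [hab.support_toWalk]
    refine ⟨hab.toWalk, hab.isPath_toWalk, hab.isChordless_toWalk,
      fun v hv _ => hsupp v hv, fun v hv hvt => ?_⟩
    rcases hsupp v hv with rfl | rfl
    exacts [absurd a.2 hvt, absurd b.2 hvt]
  · obtain ⟨⟨P, -, hside, hint⟩, -⟩ :=
      htight s t hst a.1 b.1 has a.2 hbs b.2 fun h => hne (Subtype.ext h)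
    obtain ⟨Q, hQ, hQc, hQP⟩ := P.exists_isPath_isChordless_support_subset
    refine ⟨Q, hQ, hQc, fun v hv hvt => ?_, fun v hv _ => ⟨s, hst, has, hbs, hside v (hQP v hv)⟩⟩
    by_contra! hvab
    exact hint v (hQP v hv) hvab.1 hvab.2
      ⟨hdec.mem_bag_of_mem_decompSide hst (hside v (hQP v hv)) hvt, hvt⟩

variable {R : ∀ a b : {v // v ∈ bag t}, (torso G T bag t).Adj a b → G.Walk a.1 b.1}

lemma mem_support_of_mem_support_bind (hR : ∀ a b h, IsTorsoEdgeLift T bag (R a b h))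
    {a b : {v // v ∈ bag t}} {p : (torso G T bag t).Walk a b} {v : V}
    (hv : v ∈ (p.bind R).support) (hvt : v ∈ bag t) : ⟨v, hvt⟩ ∈ p.support := by
  rcases mem_support_bind hv with rfl | ⟨d, hd, hvd⟩
  · exact p.start_mem_support
  · rcases (hR _ _ d.adj).eq_or_eq_of_mem_bag v hvd hvt with rfl | rfl
    exacts [p.dart_fst_mem_support_of_mem_darts hd, p.dart_snd_mem_support_of_mem_darts hd]

variable {c : {v // v ∈ bag t}} {C : (torso G T bag t).Walk c c}

lemma eq_or_eq_of_mem_bag_of_mem_edges (hC : C.IsCycle) (hCc : C.IsChordless)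
    (hlen : 4 ≤ C.length) {s : ι} (hst : T.Adj s t) {a b w : {v // v ∈ bag t}}
    (hab : s(a, b) ∈ C.edges) (has : a.1 ∈ bag s) (hbs : b.1 ∈ bag s) (hw : w ∈ C.support)
    (hws : w.1 ∈ bag s) : w = a ∨ w = b := by
  classical
  by_contra! ⟨hwa, hwb⟩
  have hwa' := hCc.mem_edges hw (C.fst_mem_support_of_mem_edges hab)
    ⟨hwa, .inr ⟨s, hst, hws, has⟩⟩
  have hwb' := hCc.mem_edges hw (C.snd_mem_support_of_mem_edges hab)
    ⟨hwb, .inr ⟨s, hst, hws, hbs⟩⟩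
  have := hC.length_eq_three_of_mem_edges hwa' hwb' hab
  omega

lemma dart_eq_of_mem_bag (hC : C.IsCycle) (hCc : C.IsChordless) (hlen : 4 ≤ C.length)
    {s : ι} (hst : T.Adj s t) {d d' : (torso G T bag t).Dart} (hd : d ∈ C.darts)
    (hd' : d' ∈ C.darts) (h₁ : d.fst.1 ∈ bag s) (h₂ : d.snd.1 ∈ bag s) (h₁' : d'.fst.1 ∈ bag s)
    (h₂' : d'.snd.1 ∈ bag s) : d = d' := by
  have hde : s(d.fst, d.snd) ∈ C.edges := List.mem_map_of_mem hd
  have e₁ := eq_or_eq_of_mem_bag_of_mem_edges hC hCc hlen hst hde h₁ h₂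
    (C.dart_fst_mem_support_of_mem_darts hd') h₁'
  have e₂ := eq_or_eq_of_mem_bag_of_mem_edges hC hCc hlen hst hde h₁ h₂
    (C.dart_snd_mem_support_of_mem_darts hd') h₂'
  refine List.inj_on_of_nodup_map hC.edges_nodup hd hd' ?_
  have := d'.fst_ne_snd
  rcases e₁ with e₁ | e₁ <;> rcases e₂ with e₂ | e₂ <;> simp_all [Dart.edge, Sym2.eq_swap]

lemma IsTreeDecomp.dart_eq_of_mem_support_of_notMem_bag (hdec : IsTreeDecomp G T bag)
    (hR : ∀ a b h, IsTorsoEdgeLift T bag (R a b h)) (hC : C.IsCycle) (hCc : C.IsChordless)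
    (hlen : 4 ≤ C.length) {d d' : (torso G T bag t).Dart} (hd : d ∈ C.darts)
    (hd' : d' ∈ C.darts) {u v : V} {i : ι} (hu : u ∈ (R _ _ d.adj).support) (hut : u ∉ bag t)
    (hv : v ∈ (R _ _ d'.adj).support) (hvt : v ∉ bag t) (hui : u ∈ bag i) (hvi : v ∈ bag i) :
    d = d' := by
  obtain ⟨s, hst, h₁, h₂, hus⟩ := (hR _ _ d.adj).exists_decompSide u hu hut
  obtain ⟨s', hs't, h₁', h₂', hvs'⟩ := (hR _ _ d'.adj).exists_decompSide v hv hvt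
  obtain rfl : s = s' := hdec.1.isAcyclic.eq_of_reachable_deleteEdges hst hs't
    (hdec.reachable_of_mem_decompSide hus hut hui) (hdec.reachable_of_mem_decompSide hvs' hvt hvi)
  exact dart_eq_of_mem_bag hC hCc hlen hst hd hd' h₁ h₂ h₁' h₂'

lemma IsTreeDecomp.mem_support_of_mem_bag (hdec : IsTreeDecomp G T bag)
    (hR : ∀ a b h, IsTorsoEdgeLift T bag (R a b h)) (hC : C.IsCycle) (hCc : C.IsChordless)
    (hlen : 4 ≤ C.length) {d : (torso G T bag t).Dart} (hd : d ∈ C.darts) {u : V} {i : ι}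
    (hu : u ∈ (R _ _ d.adj).support) (hut : u ∉ bag t) {w : {v // v ∈ bag t}}
    (hw : w ∈ C.support) (hui : u ∈ bag i) (hwi : w.1 ∈ bag i) :
    w.1 ∈ (R _ _ d.adj).support := by
  obtain ⟨s, hst, h₁, h₂, hus⟩ := (hR _ _ d.adj).exists_decompSide u hu hut
  have hws : w.1 ∈ bag s := hdec.mem_bag_of_reachable_deleteEdges hst
    (hdec.reachable_of_mem_decompSide hus hut hui) hwi w.2
  rcases eq_or_eq_of_mem_bag_of_mem_edges hC hCc hlen hst
    (List.mem_map_of_mem hd : s(d.fst, d.snd) ∈ C.edges) h₁ h₂ hw hws with rfl | rfl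
  exacts [start_mem_support _, end_mem_support _]

lemma IsTreeDecomp.mem_bag_of_mem_support_of_ne (hdec : IsTreeDecomp G T bag)
    (hR : ∀ a b h, IsTorsoEdgeLift T bag (R a b h)) (hC : C.IsCycle) (hCc : C.IsChordless)
    (hlen : 4 ≤ C.length) {d d' : (torso G T bag t).Dart} (hd : d ∈ C.darts)
    (hd' : d' ∈ C.darts) (hne : d ≠ d') {v : V} (hv : v ∈ (R _ _ d.adj).support)
    (hv' : v ∈ (R _ _ d'.adj).support) : v ∈ bag t := by
  by_contra hvt
  obtain ⟨i, hi⟩ := hdec.2.1 v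
  exact hne (hdec.dart_eq_of_mem_support_of_notMem_bag hR hC hCc hlen hd hd' hv hvt hv' hvt hi hi)

lemma IsTreeDecomp.isPath_bind (hdec : IsTreeDecomp G T bag)
    (hR : ∀ a b h, IsTorsoEdgeLift T bag (R a b h))
    (hC : C.IsCycle) (hCc : C.IsChordless) (hlen : 4 ≤ C.length) {a b : {v // v ∈ bag t}}
    {p : (torso G T bag t).Walk a b} (hp : p.IsPath) (hpC : ∀ d ∈ p.darts, d ∈ C.darts) :
    (p.bind R).IsPath := by
  induction p with
  | nil => simp
  | @cons x m _ h q ih =>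
    obtain ⟨hq, hxq⟩ := (cons_isPath_iff h q).mp hp
    have hC₀ : (⟨(x, m), h⟩ : (torso G T bag t).Dart) ∈ C.darts := hpC _ (List.mem_cons_self ..)
    rw [bind_cons]
    refine (hR _ _ h).isPath.append (ih hq fun d hd => hpC d (List.mem_cons_of_mem _ hd)) ?_
    intro v hv hvq
    have hvt : v ∈ bag t := by
      rcases mem_support_bind hvq with rfl | ⟨d, hd, hvd⟩
      · exact m.2
      · refine hdec.mem_bag_of_mem_support_of_ne hR hC hCc hlen hC₀
          (hpC d (List.mem_cons_of_mem _ hd)) ?_ hv hvd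
        rintro rfl
        exact hxq (q.dart_fst_mem_support_of_mem_darts hd)
    rcases (hR _ _ h).eq_or_eq_of_mem_bag v hv hvt with rfl | rfl
    · exact absurd (mem_support_of_mem_support_bind hR hvq hvt) hxq
    · rfl

lemma IsTreeDecomp.isCycle_bind (hdec : IsTreeDecomp G T bag)
    (hR : ∀ a b h, IsTorsoEdgeLift T bag (R a b h))
    (hC : C.IsCycle) (hCc : C.IsChordless) (hlen : 4 ≤ C.length) : (C.bind R).IsCycle := by
  cases C with
  | nil => exact absurd hC not_isCycle_nil
  | @cons _ x _ h p =>
    obtain ⟨hp, hnot⟩ := (cons_isCycle_iff p h).mp hC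
    have hpC : ∀ d ∈ p.darts, d ∈ (cons h p).darts := fun d hd => List.mem_cons_of_mem _ hd
    have hpb := hdec.isPath_bind hR hC hCc hlen hp hpC
    rw [bind_cons]
    refine (hR _ _ h).isPath.isCycle_append hpb (fun v hv hv' => ?_) (.inr ?_)
    · have hvt : v ∈ bag t := by
        rcases mem_support_bind (List.mem_of_mem_tail hv') with rfl | ⟨d, hd, hvd⟩
        · exact x.2
        · refine hdec.mem_bag_of_mem_support_of_ne hR hC hCc hlen (List.mem_cons_self ..)
            (hpC d hd) ?_ (List.mem_of_mem_tail hv) hvd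
          rintro rfl
          exact hnot (List.mem_map_of_mem hd)
      rcases (hR _ _ h).eq_or_eq_of_mem_bag v (List.mem_of_mem_tail hv) hvt with rfl | rfl
      · exact (hR _ _ h).isPath.start_notMem_support_tail hv
      · exact hpb.start_notMem_support_tail hv'
    · have := length_le_length_bind (R := R) Subtype.val_injective p
      simp only [length_cons] at hlen
      omega

lemma IsTreeDecomp.exists_dart_mem_support_of_notMem_bag (hdec : IsTreeDecomp G T bag)
    (hR : ∀ a b h, IsTorsoEdgeLift T bag (R a b h)) (hC : C.IsCycle) (hCc : C.IsChordless)
    (hlen : 4 ≤ C.length) {u v : V} (hu : u ∈ (C.bind R).support) (hv : v ∈ (C.bind R).support)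
    (hut : u ∉ bag t) (huv : G.Adj u v) :
    ∃ d ∈ C.darts, u ∈ (R _ _ d.adj).support ∧ v ∈ (R _ _ d.adj).support := by
  rcases mem_support_bind hu with rfl | ⟨d, hd, hud⟩
  · exact absurd c.2 hut
  obtain ⟨i, hui, hvi⟩ := hdec.2.2.1 u v huv
  refine ⟨d, hd, hud, ?_⟩
  by_cases hvt : v ∈ bag t
  · exact hdec.mem_support_of_mem_bag hR hC hCc hlen hd hud hut
      (mem_support_of_mem_support_bind hR hv hvt) hui hvi
  rcases mem_support_bind hv with rfl | ⟨d', hd', hvd'⟩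
  · exact absurd c.2 hvt
  rwa [hdec.dart_eq_of_mem_support_of_notMem_bag hR hC hCc hlen hd hd' hud hut hvd' hvt hui hvi]

lemma IsTreeDecomp.isChordless_bind (hdec : IsTreeDecomp G T bag)
    (hR : ∀ a b h, IsTorsoEdgeLift T bag (R a b h)) (hC : C.IsCycle) (hCc : C.IsChordless)
    (hlen : 4 ≤ C.length) : (C.bind R).IsChordless := by
  rw [isChordless_iff_forall_mem_edges]
  intro u v hu hv huv
  suffices ∃ d ∈ C.darts, u ∈ (R _ _ d.adj).support ∧ v ∈ (R _ _ d.adj).support by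
    obtain ⟨d, hd, hud, hvd⟩ := this
    exact edges_subset_edges_bind hd ((hR _ _ d.adj).isChordless.mem_edges hud hvd huv)
  by_cases hut : u ∈ bag t
  · by_cases hvt : v ∈ bag t
    · have huvC := hCc.mem_edges (mem_support_of_mem_support_bind hR hu hut)
        (mem_support_of_mem_support_bind hR hv hvt)
        (⟨fun h => huv.ne (congrArg Subtype.val h), .inl huv⟩ :
          (torso G T bag t).Adj ⟨u, hut⟩ ⟨v, hvt⟩)
      obtain ⟨⟨⟨a, b⟩, hab⟩, hd, hde⟩ := List.mem_map.mp huvC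
      refine ⟨_, hd, ?_⟩
      rcases Sym2.eq_iff.mp hde with ⟨rfl, rfl⟩ | ⟨rfl, rfl⟩
      exacts [⟨start_mem_support _, end_mem_support _⟩, ⟨end_mem_support _, start_mem_support _⟩]
    · obtain ⟨d, hd, hvd, hud⟩ :=
        hdec.exists_dart_mem_support_of_notMem_bag hR hC hCc hlen hv hu hvt huv.symm
      exact ⟨d, hd, hud, hvd⟩
  · exact hdec.exists_dart_mem_support_of_notMem_bag hR hC hCc hlen hu hv hut huv

end torso

theorem stmt_7 {V ι : Type} (G : SimpleGraph V) (T : SimpleGraph ι)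
    (bag : ι → Finset V) (hdec : IsTreeDecomp G T bag)
    (htight : IsTightDecomp G T bag)
    (ℓ : ℕ) (hℓ : 4 ≤ ℓ)
    -- G is ℓ-chordal
    (hG : ∀ (v : V) (C : G.Walk v v), C.IsCycle → WalkInduced C → C.length ≤ ℓ) :
    -- then every torso is ℓ-chordal
    ∀ (t : ι) (c : {v : V // v ∈ bag t}) (C : (torso G T bag t).Walk c c),
      C.IsCycle → WalkInduced C → C.length ≤ ℓ := by
  intro t c C hC hCi
  rw [walkInduced_iff_isChordless] at hCi
  by_contra! hlong
  have hlen : 4 ≤ C.length := by omega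
  choose R hR using fun a b (h : (torso G T bag t).Adj a b) => hdec.exists_isTorsoEdgeLift htight h
  have hC' := hG c.1 (C.bind R) (hdec.isCycle_bind hR hC hCi hlen)
    ((walkInduced_iff_isChordless _).mpr (hdec.isChordless_bind hR hC hCi hlen))
  have := Walk.length_le_length_bind (R := R) Subtype.val_injective C
  omega
end

section
/- Every chordal graph with no clique on k+1 vertices has tree-width less than k. -/
open SimpleGraph

/-!
Dirac: in a chordal graph every minimal vertex separator is a clique, since two non-adjacent
vertices of a minimal `a`-`b` separator are joined by chordless paths through the components of
`a` and of `b`, which close up to an induced cycle of length at least four. By induction, a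
chordal graph is complete or has two non-adjacent simplicial vertices, so its vertices can be
eliminated one simplicial vertex at a time: in this perfect elimination order the later
neighbours of every vertex form a clique. Joining each vertex to its first later neighbour (or
to an extra root) gives a tree. The bag of `v` is `v` with its later neighbours, a clique and
hence of size at most `k`; the bags containing `w` form a subtree because the parent of an
earlier neighbour of `w` is `w` itself or another earlier neighbour of `w`.
-/

namespace SimpleGraph

section ChordalGraphs

variable {V : Type*} {G : SimpleGraph V}

def ReachableIn (G : SimpleGraph V) (B : Set V) (u v : V) : Prop :=
  ∃ W : G.Walk u v, ∀ x ∈ W.support, x ∈ B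

namespace ReachableIn

variable {B : Set V} {u v w : V}

lemma refl (hu : u ∈ B) : G.ReachableIn B u u :=
  ⟨.nil, by simpa using hu⟩

lemma of_adj (h : G.Adj u v) (hu : u ∈ B) (hv : v ∈ B) : G.ReachableIn B u v :=
  ⟨h.toWalk, by simp [hu, hv]⟩

lemma symm (h : G.ReachableIn B u v) : G.ReachableIn B v u := by
  obtain ⟨W, hW⟩ := h
  exact ⟨W.reverse, by simpa using hW⟩

lemma trans (h : G.ReachableIn B u v) (h' : G.ReachableIn B v w) : G.ReachableIn B u w := by
  obtain ⟨W, hW⟩ := h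
  obtain ⟨W', hW'⟩ := h'
  exact ⟨W.append W', by simp only [Walk.mem_support_append_iff]; grind⟩

lemma mem_right (h : G.ReachableIn B u v) : v ∈ B :=
  h.elim fun W hW => hW v W.end_mem_support

lemma mono {B' : Set V} (h : G.ReachableIn B u v) (hB : B ⊆ B') : G.ReachableIn B' u v :=
  h.elim fun W hW => ⟨W, fun x hx => hB (hW x hx)⟩

lemma trans_adj (h : G.ReachableIn B u v) (hadj : G.Adj v w) (hw : w ∈ B) :
    G.ReachableIn B u w :=
  h.trans (of_adj hadj h.mem_right hw)

lemma in_component (hw : G.ReachableIn B w u) (h : G.ReachableIn B u v) :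
    G.ReachableIn {x | G.ReachableIn B w x} u v := by
  classical
  obtain ⟨W, hW⟩ := h
  exact ⟨W, fun x hx => hw.trans ⟨W.takeUntil x hx,
    fun y hy => hW y (W.support_takeUntil_subset_support hx hy)⟩⟩

lemma exists_adj_of_insert (h : G.ReachableIn (insert v B) u v) (hu : u ∈ B) (hv : v ∉ B) :
    ∃ x, G.Adj x v ∧ G.ReachableIn B u x := by
  obtain ⟨W, hW⟩ := h
  induction W with
  | nil => exact absurd hu hv
  | @cons a w _ had p ih =>
    by_cases hw : w ∈ B
    · obtain ⟨x, hxv, hx⟩ := ih hw hv (fun x hx => hW x (by simp [hx]))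
      exact ⟨x, hxv, (of_adj had hu hw).trans hx⟩
    · obtain rfl : w = _ := (hW w (by simp)).resolve_right hw
      exact ⟨a, had, refl hu⟩

end ReachableIn

namespace Walk

variable {s t u v : V}

lemma two_le_length_of_adj_of_notMem_edges (r : G.Walk u v) (huv : G.Adj u v)
    (he : s(u, v) ∉ r.edges) : 2 ≤ r.length := by
  cases r with
  | nil => exact absurd rfl huv.ne
  | cons _ r =>
    cases r with
    | nil => simp at he
    | cons => simp

lemma exists_shorter_of_adj {p : G.Walk s t} (huv : G.Adj u v) (hu : u ∈ p.support)
    (hv : v ∈ p.support) (he : s(u, v) ∉ p.edges) :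
    ∃ q : G.Walk s t, q.length < p.length ∧ q.support ⊆ p.support := by
  classical
  have hsplit := p.take_spec hu
  have hv' : v ∈ (p.takeUntil u hu).support ∨ v ∈ (p.dropUntil u hu).support := by
    rw [← mem_support_append_iff, hsplit]
    exact hv
  have hlen := congrArg length hsplit
  rw [length_append] at hlen
  rcases hv' with hv' | hv'
  · set p₁ := p.takeUntil u hu
    have hr := (p₁.dropUntil v hv').two_le_length_of_adj_of_notMem_edges huv.symm fun h =>
      he (Sym2.eq_swap ▸ p.edges_takeUntil_subset_edges hu (p₁.edges_dropUntil_subset_edges hv' h))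
    have hlen₁ := congrArg length (p₁.take_spec hv')
    rw [length_append] at hlen₁
    refine ⟨(p₁.takeUntil v hv').append (cons huv.symm (p.dropUntil u hu)), ?_, ?_⟩
    · rw [length_append, length_cons]
      omega
    · intro x hx
      rw [mem_support_append_iff, support_cons, List.mem_cons] at hx
      rcases hx with hx | rfl | hx
      · exact p.support_takeUntil_subset_support hu (p₁.support_takeUntil_subset_support hv' hx)
      · exact hv
      · exact p.support_dropUntil_subset_support hu hx
  · set p₂ := p.dropUntil u hu
    have hr := (p₂.takeUntil v hv').two_le_length_of_adj_of_notMem_edges huv fun h =>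
      he (p.edges_dropUntil_subset_edges hu (p₂.edges_takeUntil_subset_edges hv' h))
    have hlen₂ := congrArg length (p₂.take_spec hv')
    rw [length_append] at hlen₂
    refine ⟨(p.takeUntil u hu).append (cons huv (p₂.dropUntil v hv')), ?_, ?_⟩
    · rw [length_append, length_cons]
      omega
    · intro x hx
      rw [mem_support_append_iff, support_cons, List.mem_cons] at hx
      rcases hx with hx | rfl | hx
      · exact p.support_takeUntil_subset_support hu hx
      · exact hu
      · exact p.support_dropUntil_subset_support hu (p₂.support_dropUntil_subset_support hv' hx)

lemma exists_isPath_isChordless_subset (W : G.Walk s t) :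
    ∃ P : G.Walk s t, P.IsPath ∧ P.IsChordless ∧ P.support ⊆ W.support := by
  classical
  induction hn : W.length using Nat.strong_induction_on generalizing W with
  | _ n ih =>
    by_cases hc : W.bypass.IsChordless
    · exact ⟨W.bypass, W.bypass_isPath, hc, W.support_bypass_subset_support⟩
    · obtain ⟨u, v, hu, hv, huv, he⟩ : ∃ u v, u ∈ W.bypass.support ∧ v ∈ W.bypass.support ∧
          G.Adj u v ∧ s(u, v) ∉ W.bypass.edges := by
        simpa [isChordless_iff_forall_mem_edges] using hc
      obtain ⟨q, hq, hqW⟩ := exists_shorter_of_adj huv hu hv he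
      obtain ⟨P, hP, hPc, hPq⟩ := ih _ (hn ▸ hq.trans_le W.length_bypass_le_length) q rfl
      exact ⟨P, hP, hPc, fun x hx => W.support_bypass_subset_support (hqW (hPq hx))⟩

lemma two_le_length_of_not_adj (P : G.Walk s t) (hst : s ≠ t) (hadj : ¬ G.Adj s t) :
    2 ≤ P.length := by
  by_contra! h
  interval_cases hP : P.length
  · exact hst (eq_of_length_eq_zero hP)
  · exact hadj (adj_of_length_eq_one hP)

lemma IsPath.start_notMem_support_tail_s14 {P : G.Walk s t} (hP : P.IsPath) :
    s ∉ P.support.tail :=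
  (List.nodup_cons.mp (P.cons_tail_support ▸ hP.support_nodup)).1

lemma IsPath.isCycle_isChordless_append_reverse {P Q : G.Walk s t} (hP : P.IsPath)
    (hQ : Q.IsPath) (hPc : P.IsChordless) (hQc : Q.IsChordless) (hst : s ≠ t)
    (hadj : ¬ G.Adj s t) {X Y : Set V} (hPX : ∀ x ∈ P.support, x = s ∨ x = t ∨ x ∈ X)
    (hQY : ∀ y ∈ Q.support, y = s ∨ y = t ∨ y ∈ Y)
    (hXY : ∀ x ∈ X, ∀ y ∈ Y, x ≠ y ∧ ¬ G.Adj x y) :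
    (P.append Q.reverse).IsCycle ∧ (P.append Q.reverse).IsChordless ∧
      4 ≤ (P.append Q.reverse).length := by
  have hP2 := P.two_le_length_of_not_adj hst hadj
  have hQ2 := Q.two_le_length_of_not_adj hst hadj
  have hmeet : ∀ z ∈ P.support, z ∈ Q.support → z = s ∨ z = t := by
    intro z hzP hzQ
    rcases hPX z hzP with h | h | hzX
    · exact .inl h
    · exact .inr h
    rcases hQY z hzQ with h | h | hzY
    · exact .inl h
    · exact .inr h
    exact absurd rfl (hXY z hzX z hzY).1
  have hcross : ∀ x ∈ P.support, ∀ y ∈ Q.support, x ∉ Q.support → y ∉ P.support →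
      ¬ G.Adj x y := by
    intro x hxP y hyQ hxQ hyP
    obtain ⟨hxs, hxt⟩ : x ≠ s ∧ x ≠ t := by
      constructor <;> rintro rfl <;> simp at hxQ
    obtain ⟨hys, hyt⟩ : y ≠ s ∧ y ≠ t := by
      constructor <;> rintro rfl <;> simp at hyP
    have hxX := ((hPX x hxP).resolve_left hxs).resolve_left hxt
    have hyY := ((hQY y hyQ).resolve_left hys).resolve_left hyt
    exact (hXY x hxX y hyY).2
  refine ⟨hP.isCycle_append hQ.reverse ?_ (by omega), ?_, by simp; omega⟩
  · intro z hzP hzQ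
    have hzQ' : z ∈ Q.support := by simpa using List.mem_of_mem_tail hzQ
    rcases hmeet z (List.mem_of_mem_tail hzP) hzQ' with rfl | rfl
    · exact hP.start_notMem_support_tail_s14 hzP
    · exact hQ.reverse.start_notMem_support_tail_s14 hzQ
  · rw [isChordless_iff_forall_mem_edges]
    intro a b ha hb hab
    simp only [mem_support_append_iff, support_reverse, List.mem_reverse] at ha hb
    simp only [edges_append, edges_reverse, List.mem_append, List.mem_reverse]
    by_cases hPab : a ∈ P.support ∧ b ∈ P.support
    · exact .inl (hPc.mem_edges hPab.1 hPab.2 hab)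
    by_cases hQab : a ∈ Q.support ∧ b ∈ Q.support
    · exact .inr (hQc.mem_edges hQab.1 hQab.2 hab)
    rcases ha with ha | ha <;> rcases hb with hb | hb
    · exact absurd ⟨ha, hb⟩ hPab
    · exact absurd hab (hcross a ha b hb (fun h => hQab ⟨h, hb⟩) (fun h => hPab ⟨ha, h⟩))
    · exact absurd hab.symm (hcross b hb a ha (fun h => hQab ⟨ha, h⟩) (fun h => hPab ⟨h, hb⟩))
    · exact absurd ⟨ha, hb⟩ hQab

end Walk

lemma ReachableIn.exists_isPath_isChordless {B : Set V} {s t : V} (h : G.ReachableIn B s t) :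
    ∃ P : G.Walk s t, P.IsPath ∧ P.IsChordless ∧ ∀ x ∈ P.support, x ∈ B := by
  obtain ⟨W, hW⟩ := h
  obtain ⟨P, hP, hPc, hPW⟩ := W.exists_isPath_isChordless_subset
  exact ⟨P, hP, hPc, fun x hx => hW x (hPW hx)⟩

def IsChordal (G : SimpleGraph V) : Prop :=
  ∀ ⦃v : V⦄ (c : G.Walk v v), c.IsCycle → c.IsChordless → c.length < 4

def Separates (G : SimpleGraph V) (A S : Finset V) (a b : V) : Prop :=
  S ⊆ A ∧ a ∉ S ∧ b ∉ S ∧ ¬ G.ReachableIn (↑A \ ↑S) a b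

variable {A B S : Finset V} {a b v : V}

lemma Separates.symm (h : G.Separates A S a b) : G.Separates A S b a :=
  ⟨h.1, h.2.2.1, h.2.1, fun h' => h.2.2.2 h'.symm⟩

lemma MinimalFor.separates_symm (h : MinimalFor (G.Separates A · a b) Finset.card S) :
    MinimalFor (G.Separates A · b a) Finset.card S :=
  ⟨h.1.symm, fun _ h' => h.2 h'.symm⟩

lemma exists_minimalFor_separates (hab : a ≠ b) (hadj : ¬ G.Adj a b) :
    ∃ S, MinimalFor (G.Separates A · a b) Finset.card S := by
  classical
  refine exists_minimalFor_of_wellFoundedLT _ _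
    ⟨A \ {a, b}, Finset.sdiff_subset, by simp, by simp, fun h => ?_⟩
  have h' : G.ReachableIn (insert b {a}) a b := h.mono fun x hx => by
    simp only [Finset.coe_sdiff, Set.mem_sdiff, Finset.mem_coe, Finset.coe_insert,
      Finset.coe_singleton, Set.mem_insert_iff, Set.mem_singleton_iff] at hx ⊢
    tauto
  obtain ⟨x, hxb, hx⟩ := h'.exists_adj_of_insert rfl (by simpa using hab.symm)
  obtain rfl : x = a := hx.mem_right
  exact hadj hxb

lemma exists_adj_of_minimalFor_separates (ha : a ∈ A)
    (hS : MinimalFor (G.Separates A · a b) Finset.card S) {s : V} (hs : s ∈ S) :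
    ∃ x, G.Adj s x ∧ G.ReachableIn (↑A \ ↑S) a x := by
  classical
  obtain ⟨hSA, haS, hbS, hab⟩ := hS.1
  have hr : G.ReachableIn (↑A \ ↑(S.erase s)) a b := by
    by_contra h
    exact (Finset.card_erase_lt_of_mem hs).not_ge <| hS.2 ⟨(S.erase_subset s).trans hSA,
      fun h' => haS (Finset.mem_of_mem_erase h'), fun h' => hbS (Finset.mem_of_mem_erase h'), h⟩
      Finset.card_erase_le
  obtain ⟨W, hW⟩ := hr
  have hW' : ∀ x ∈ W.support, x ∈ insert s (↑A \ ↑S : Set V) := by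
    intro x hx
    have := hW x hx
    simp only [Finset.coe_erase, Set.mem_sdiff, Finset.mem_coe, Set.mem_insert_iff] at this ⊢
    by_cases hxs : x = s
    · exact .inl hxs
    · exact .inr ⟨this.1, fun hxS => this.2 ⟨hxS, hxs⟩⟩
  by_cases hsW : s ∈ W.support
  · obtain ⟨x, hxs, hx⟩ := ReachableIn.exists_adj_of_insert
      ⟨W.takeUntil s hsW, fun x hx => hW' x (W.support_takeUntil_subset_support hsW hx)⟩
      ⟨ha, haS⟩ (fun h => h.2 hs)
    exact ⟨x, hxs.symm, hx⟩
  · refine absurd ⟨W, fun x hx => ?_⟩ hab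
    exact (hW' x hx).resolve_left (fun h => hsW (h ▸ hx))

lemma IsChordal.isClique_of_minimalFor_separates (hG : G.IsChordal) (ha : a ∈ A) (hb : b ∈ A)
    (hS : MinimalFor (G.Separates A · a b) Finset.card S) : G.IsClique (S : Set V) := by
  intro s hs t ht hst
  by_contra hadj
  let comp (c : V) : Set V := {x | G.ReachableIn (↑A \ ↑S) c x}
  have path_through {c d : V} (hc : c ∈ A) (hS' : MinimalFor (G.Separates A · c d) Finset.card S) :
      ∃ P : G.Walk s t, P.IsPath ∧ P.IsChordless ∧ ∀ x ∈ P.support, x = s ∨ x = t ∨ x ∈ comp c := by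
    obtain ⟨xs, hsx, hxs⟩ := exists_adj_of_minimalFor_separates hc hS' hs
    obtain ⟨xt, htx, hxt⟩ := exists_adj_of_minimalFor_separates hc hS' ht
    have hsub : comp c ⊆ insert s (insert t (comp c)) := fun x hx => .inr (.inr hx)
    have hst : G.ReachableIn (insert s (insert t (comp c))) s t :=
      ((ReachableIn.of_adj hsx (.inl rfl) (hsub hxs)).trans
        ((hxs.in_component (hxs.symm.trans hxt)).mono hsub)).trans_adj htx.symm (.inr (.inl rfl))
    exact hst.exists_isPath_isChordless
  obtain ⟨P, hP, hPc, hPa⟩ := path_through ha hS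
  obtain ⟨Q, hQ, hQc, hQb⟩ := path_through hb hS.separates_symm
  have hab : ∀ x ∈ comp a, ∀ y ∈ comp b, x ≠ y ∧ ¬ G.Adj x y := by
    intro x (hx : G.ReachableIn _ a x) y (hy : G.ReachableIn _ b y)
    refine ⟨fun hxy => hS.1.2.2.2 (hx.trans (hxy ▸ hy.symm)), fun hxy => ?_⟩
    exact hS.1.2.2.2 ((hx.trans_adj hxy hy.mem_right).trans hy.symm)
  obtain ⟨hcyc, hchordless, hlen⟩ :=
    hP.isCycle_isChordless_append_reverse hQ hPc hQc hst hadj hPa hQb hab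
  exact (hG _ hcyc hchordless).not_ge hlen

def IsSimplicialIn (G : SimpleGraph V) (A : Finset V) (v : V) : Prop :=
  v ∈ A ∧ G.IsClique (↑A ∩ G.neighborSet v)

lemma IsSimplicialIn.of_subset (hv : G.IsSimplicialIn B v) (hBA : B ⊆ A)
    (hN : ∀ w ∈ A, G.Adj v w → w ∈ B) : G.IsSimplicialIn A v :=
  ⟨hBA hv.1, hv.2.subset fun w hw => show w ∈ (B : Set V) ∩ _ from ⟨hN w hw.1 hw.2, hw.2⟩⟩

lemma IsClique.isSimplicialIn (hA : G.IsClique (A : Set V)) (hv : v ∈ A) :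
    G.IsSimplicialIn A v :=
  ⟨hv, hA.subset Set.inter_subset_left⟩

lemma IsChordal.exists_isSimplicialIn_of_minimalFor_separates (hG : G.IsChordal)
    (IH : ∀ B ⊂ A, B.Nonempty → G.IsClique (B : Set V) ∨
      ∃ x y, x ≠ y ∧ ¬ G.Adj x y ∧ G.IsSimplicialIn B x ∧ G.IsSimplicialIn B y)
    (ha : a ∈ A) (hb : b ∈ A) (hS : MinimalFor (G.Separates A · a b) Finset.card S) :
    ∃ u, G.ReachableIn (↑A \ ↑S) a u ∧ G.IsSimplicialIn A u := by
  classical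
  obtain ⟨hSA, haS, hbS, hab⟩ := hS.1
  set Ca := A.filter (G.ReachableIn (↑A \ ↑S) a)
  have haCa : a ∈ Ca := Finset.mem_filter.mpr ⟨ha, .refl ⟨ha, haS⟩⟩
  have hBA : Ca ∪ S ⊂ A := by
    refine Finset.ssubset_iff_of_subset (Finset.union_subset (Finset.filter_subset _ _) hSA)
      |>.mpr ⟨b, hb, ?_⟩
    simp only [Finset.mem_union, Finset.mem_filter, not_or]
    exact ⟨fun h => hab h.2, hbS⟩
  have hclosed : ∀ u ∈ Ca, ∀ w ∈ A, G.Adj u w → w ∈ Ca ∪ S := by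
    intro u hu w hw huw
    rw [Finset.mem_union, Finset.mem_filter]
    by_cases hwS : w ∈ S
    · exact .inr hwS
    · exact .inl ⟨hw, (Finset.mem_filter.mp hu).2.trans_adj huw ⟨hw, hwS⟩⟩
  have hsimp : ∀ u ∈ Ca, G.IsSimplicialIn (Ca ∪ S) u →
      ∃ u, G.ReachableIn (↑A \ ↑S) a u ∧ G.IsSimplicialIn A u := fun u hu hsu =>
    ⟨u, (Finset.mem_filter.mp hu).2, hsu.of_subset hBA.subset (hclosed u hu)⟩
  rcases IH _ hBA ⟨a, Finset.mem_union_left _ haCa⟩ with hcl | ⟨x, y, hxy, hadj, hx, hy⟩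
  · exact hsimp a haCa (hcl.isSimplicialIn (Finset.mem_union_left _ haCa))
  · have hSc := hG.isClique_of_minimalFor_separates ha hb hS
    rcases Finset.mem_union.mp hx.1 with hxC | hxS
    · exact hsimp x hxC hx
    rcases Finset.mem_union.mp hy.1 with hyC | hyS
    · exact hsimp y hyC hy
    exact absurd (hSc hxS hyS hxy) hadj

theorem IsChordal.isClique_or_exists_isSimplicialIn (hG : G.IsChordal) (A : Finset V)
    (hA : A.Nonempty) : G.IsClique (A : Set V) ∨
      ∃ x y, x ≠ y ∧ ¬ G.Adj x y ∧ G.IsSimplicialIn A x ∧ G.IsSimplicialIn A y := by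
  induction A using Finset.strongInduction with
  | H A IH =>
    rw [or_iff_not_imp_left]
    intro hA'
    obtain ⟨a, ha, b, hb, hab, hadj⟩ : ∃ a ∈ A, ∃ b ∈ A, a ≠ b ∧ ¬ G.Adj a b := by
      simpa [IsClique, Set.Pairwise] using hA'
    obtain ⟨S, hS⟩ := exists_minimalFor_separates (A := A) hab hadj
    obtain ⟨u, hu, hsu⟩ := hG.exists_isSimplicialIn_of_minimalFor_separates IH ha hb hS
    obtain ⟨v, hv, hsv⟩ :=
      hG.exists_isSimplicialIn_of_minimalFor_separates IH hb ha hS.separates_symm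
    refine ⟨u, v, fun huv => hS.1.2.2.2 (hu.trans (huv ▸ hv.symm)), fun huv => ?_, hsu, hsv⟩
    exact hS.1.2.2.2 ((hu.trans_adj huv hv.mem_right).trans hv.symm)

lemma IsChordal.exists_isSimplicialIn (hG : G.IsChordal) (hA : A.Nonempty) :
    ∃ v, G.IsSimplicialIn A v := by
  rcases hG.isClique_or_exists_isSimplicialIn A hA with hcl | ⟨x, -, -, -, hx, -⟩
  · obtain ⟨v, hv⟩ := hA
    exact ⟨v, hcl.isSimplicialIn hv⟩
  · exact ⟨x, hx⟩

def IsPerfectEliminationOrder (G : SimpleGraph V) (ord : V → ℕ) : Prop :=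
  Function.Injective ord ∧ ∀ v, G.IsClique {w | G.Adj v w ∧ ord v < ord w}

lemma IsChordal.exists_perfectEliminationOrder_on (hG : G.IsChordal) (A : Finset V) :
    ∃ ord : V → ℕ, Set.InjOn ord A ∧
      ∀ v ∈ A, G.IsClique {w | w ∈ A ∧ G.Adj v w ∧ ord v < ord w} := by
  classical
  induction A using Finset.strongInduction with
  | H A IH =>
    rcases A.eq_empty_or_nonempty with rfl | hA
    · exact ⟨0, by simp, by simp⟩
    obtain ⟨v, hvA, hv⟩ := hG.exists_isSimplicialIn hA
    obtain ⟨ord, hinj, hcl⟩ := IH _ (A.erase_ssubset hvA)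
    refine ⟨fun w => if w = v then 0 else ord w + 1, ?_, ?_⟩
    · intro x hx y hy hxy
      by_cases hxv : x = v <;> by_cases hyv : y = v <;>
        simp only [hxv, hyv, if_true, if_false] at hxy
      · exact hxv.trans hyv.symm
      · omega
      · omega
      · exact hinj (Finset.mem_erase.mpr ⟨hxv, hx⟩) (Finset.mem_erase.mpr ⟨hyv, hy⟩) (by omega)
    · intro u hu
      by_cases huv : u = v
      · subst huv
        exact hv.subset fun w hw => show w ∈ (A : Set V) ∩ _ from ⟨hw.1, hw.2.1⟩
      · refine (hcl u (Finset.mem_erase.mpr ⟨huv, hu⟩)).subset fun w ⟨hwA, huw, hlt⟩ => ?_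
        have hwv : w ≠ v := by rintro rfl; simp [huv] at hlt
        simp only [huv, hwv, if_false] at hlt
        exact ⟨Finset.mem_erase.mpr ⟨hwv, hwA⟩, huw, by omega⟩

lemma IsChordal.exists_isPerfectEliminationOrder [Fintype V] (hG : G.IsChordal) :
    ∃ ord, G.IsPerfectEliminationOrder ord := by
  obtain ⟨ord, hinj, hcl⟩ := hG.exists_perfectEliminationOrder_on Finset.univ
  exact ⟨ord, by simpa using hinj, fun v => by simpa using hcl v (Finset.mem_univ v)⟩

lemma IsClique.card_le_of_cliqueFree {s : Finset V} {k : ℕ} (hs : G.IsClique (s : Set V))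
    (h : G.CliqueFree (k + 1)) : s.card ≤ k := by
  by_contra! hk
  exact h.mono hk s ⟨hs, rfl⟩

end ChordalGraphs

section RankedGraphs

variable {ι α : Type*} [LinearOrder α] {T : SimpleGraph ι}

/-- A vertex of maximal rank among those not reaching `r` would have to reach `r` through its
higher neighbour. -/
lemma connected_of_exists_adj_lt [Finite ι] (rank : ι → α) (r : ι)
    (h : ∀ i ≠ r, ∃ j, T.Adj i j ∧ rank i < rank j) : T.Connected := by
  suffices hr : ∀ i, T.Reachable i r from
    (connected_iff_exists_forall_reachable T).mpr ⟨r, fun i => (hr i).symm⟩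
  by_contra! hN
  obtain ⟨i, hi, hmax⟩ := Set.exists_max_image {i | ¬ T.Reachable i r} rank
    (Set.toFinite _) hN
  obtain ⟨j, hij, hlt⟩ := h i (by rintro rfl; exact hi (Reachable.refl _))
  have hj : T.Reachable j r := by
    by_contra hj
    exact (hmax j hj).not_gt hlt
  exact hi (hij.reachable.trans hj)

/-- On a cycle, a vertex of minimal rank has two distinct neighbours of higher rank. -/
lemma isAcyclic_of_adj_lt_unique (rank : ι → α) (hne : ∀ i j, T.Adj i j → rank i ≠ rank j)
    (huniq : ∀ i j j', T.Adj i j → T.Adj i j' → rank i < rank j → rank i < rank j' → j = j') :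
    T.IsAcyclic := by
  classical
  intro v c hc
  obtain ⟨u, hu, hmin⟩ := Set.exists_min_image {x | x ∈ c.support} rank
    (c.support.finite_toSet) ⟨v, c.start_mem_support⟩
  have hc' := hc.rotate hu
  set c' := c.rotate u hu
  have hlt : ∀ x ∈ c'.support, T.Adj u x → rank u < rank x := fun x hx hux =>
    lt_of_le_of_ne (hmin x ((c.mem_support_rotate_iff u hu).mp hx)) (hne u x hux)
  exact hc'.snd_ne_penultimate <| huniq u _ _ (c'.adj_snd hc'.not_nil)
    (c'.adj_penultimate hc'.not_nil).symm
    (hlt _ (c'.getVert_mem_support 1) (c'.adj_snd hc'.not_nil))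
    (hlt _ (c'.getVert_mem_support _) (c'.adj_penultimate hc'.not_nil).symm)

end RankedGraphs

section EliminationTree

variable {V : Type*} {G : SimpleGraph V} {ord : V → ℕ}

open Classical in
noncomputable def eliminationParent (G : SimpleGraph V) (ord : V → ℕ) (v : V) : Option V :=
  if h : ∃ w, G.Adj v w ∧ ord v < ord w then
    some (Function.argminOn ord {w | G.Adj v w ∧ ord v < ord w} h)
  else none

def eliminationRank (ord : V → ℕ) : Option V → WithTop ℕ
  | none => ⊤
  | some v => ord v

/-- Rooted at `none`, the parent of the vertices without later neighbours. -/
def eliminationTree (G : SimpleGraph V) (ord : V → ℕ) : SimpleGraph (Option V) :=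
  fromRel fun i j => ∃ v, i = some v ∧ j = G.eliminationParent ord v

lemma adj_of_eliminationParent_eq_some {v p : V} (h : G.eliminationParent ord v = some p) :
    G.Adj v p ∧ ord v < ord p := by
  unfold eliminationParent at h
  split_ifs at h with hv
  cases h
  exact Function.argminOn_mem _ _ hv

lemma exists_eliminationParent_eq_some {v w : V} (hvw : G.Adj v w) (hlt : ord v < ord w) :
    ∃ p, G.eliminationParent ord v = some p ∧ ord p ≤ ord w := by
  have hv : ∃ w, G.Adj v w ∧ ord v < ord w := ⟨w, hvw, hlt⟩
  exact ⟨_, dif_pos hv, Function.argminOn_le ord {w | G.Adj v w ∧ ord v < ord w} ⟨hvw, hlt⟩⟩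

lemma eliminationRank_lt_eliminationParent (v : V) :
    eliminationRank ord (some v) < eliminationRank ord (G.eliminationParent ord v) := by
  cases hp : G.eliminationParent ord v with
  | none => exact WithTop.coe_lt_top _
  | some p => exact WithTop.coe_lt_coe.mpr (adj_of_eliminationParent_eq_some hp).2

lemma eliminationTree_adj_eliminationParent (v : V) :
    (G.eliminationTree ord).Adj (some v) (G.eliminationParent ord v) :=
  (fromRel_adj _ _ _).mpr ⟨fun h => (eliminationRank_lt_eliminationParent v).ne (congrArg _ h),
    .inl ⟨v, rfl, rfl⟩⟩

lemma eq_eliminationParent_of_eliminationTree_adj {i j : Option V}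
    (h : (G.eliminationTree ord).Adj i j) (hij : eliminationRank ord i ≤ eliminationRank ord j) :
    ∃ v, i = some v ∧ j = G.eliminationParent ord v := by
  rcases ((fromRel_adj _ _ _).mp h).2 with hr | ⟨v, rfl, rfl⟩
  · exact hr
  · exact absurd hij (eliminationRank_lt_eliminationParent v).not_ge

lemma eliminationRank_ne_of_eliminationTree_adj {i j : Option V}
    (h : (G.eliminationTree ord).Adj i j) : eliminationRank ord i ≠ eliminationRank ord j := by
  intro hij
  obtain ⟨v, rfl, rfl⟩ := eq_eliminationParent_of_eliminationTree_adj h hij.le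
  exact (eliminationRank_lt_eliminationParent v).ne hij

lemma isTree_eliminationTree [Finite V] : (G.eliminationTree ord).IsTree where
  connected := connected_of_exists_adj_lt (eliminationRank ord) none fun i hi => by
    obtain ⟨v, rfl⟩ := Option.ne_none_iff_exists'.mp hi
    exact ⟨_, eliminationTree_adj_eliminationParent v, eliminationRank_lt_eliminationParent v⟩
  isAcyclic := isAcyclic_of_adj_lt_unique (eliminationRank ord)
    (fun _ _ => eliminationRank_ne_of_eliminationTree_adj) fun i j j' hj hj' hij hij' => by
      obtain ⟨v, rfl, rfl⟩ := eq_eliminationParent_of_eliminationTree_adj hj hij.le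
      obtain ⟨v', hv', rfl⟩ := eq_eliminationParent_of_eliminationTree_adj hj' hij'.le
      cases hv'
      rfl

end EliminationTree

section TreeDecomposition

variable {V : Type} [Fintype V] {G : SimpleGraph V} {ord : V → ℕ}

open Classical in
noncomputable def eliminationBag (G : SimpleGraph V) (ord : V → ℕ) : Option V → Finset V
  | none => ∅
  | some v => insert v ({w | G.Adj v w ∧ ord v < ord w} : Finset V)

lemma mem_eliminationBag_some {v w : V} :
    w ∈ G.eliminationBag ord (some v) ↔ w = v ∨ G.Adj v w ∧ ord v < ord w := by
  simp [eliminationBag]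

lemma mem_eliminationBag_self (v : V) : v ∈ G.eliminationBag ord (some v) :=
  mem_eliminationBag_some.mpr (.inl rfl)

lemma mem_eliminationBag_of_adj {v w : V} (hvw : G.Adj v w) (hlt : ord v < ord w) :
    w ∈ G.eliminationBag ord (some v) :=
  mem_eliminationBag_some.mpr (.inr ⟨hvw, hlt⟩)

lemma IsPerfectEliminationOrder.isClique_eliminationBag (h : G.IsPerfectEliminationOrder ord)
    (i : Option V) : G.IsClique (G.eliminationBag ord i : Set V) := by
  classical
  cases i with
  | none => simp [eliminationBag]
  | some v =>
    rw [eliminationBag, Finset.coe_insert, isClique_insert]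
    refine ⟨(h.2 v).subset fun w hw => by simpa using hw, fun w hw _ => by simp_all⟩

lemma IsPerfectEliminationOrder.connected_induce_eliminationBag
    (h : G.IsPerfectEliminationOrder ord) (w : V) :
    ((G.eliminationTree ord).induce {i | w ∈ G.eliminationBag ord i}).Connected := by
  refine connected_of_exists_adj_lt (eliminationRank ord ∘ Subtype.val)
    ⟨some w, mem_eliminationBag_self w⟩ ?_
  rintro ⟨_ | u, hu⟩ hne
  · simp [eliminationBag] at hu
  have huw : u ≠ w := by rintro rfl; exact hne rfl
  obtain ⟨huw_adj, huw_lt⟩ := (mem_eliminationBag_some.mp hu).resolve_left huw.symm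
  obtain ⟨p, hp, hpw⟩ := exists_eliminationParent_eq_some huw_adj huw_lt
  obtain ⟨hup_adj, hup_lt⟩ := adj_of_eliminationParent_eq_some hp
  have hw : w ∈ G.eliminationBag ord (some p) := by
    by_cases hwp : w = p
    · exact hwp ▸ mem_eliminationBag_self w
    exact mem_eliminationBag_of_adj (h.2 u ⟨hup_adj, hup_lt⟩ ⟨huw_adj, huw_lt⟩ (Ne.symm hwp))
      (lt_of_le_of_ne hpw fun he => hwp (h.1 he).symm)
  refine ⟨⟨some p, hw⟩, ?_, ?_⟩
  · simpa [← hp] using eliminationTree_adj_eliminationParent (G := G) (ord := ord) u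
  · simpa [← hp] using eliminationRank_lt_eliminationParent (G := G) (ord := ord) u

lemma IsPerfectEliminationOrder.isTreeDecomp (h : G.IsPerfectEliminationOrder ord) :
    IsTreeDecomp G (G.eliminationTree ord) (G.eliminationBag ord) := by
  refine ⟨isTree_eliminationTree, fun v => ⟨some v, mem_eliminationBag_self v⟩,
    fun u v huv => ?_, h.connected_induce_eliminationBag⟩
  rcases lt_or_gt_of_ne (h.1.ne huv.ne) with hlt | hlt
  · exact ⟨some u, mem_eliminationBag_self u, mem_eliminationBag_of_adj huv hlt⟩
  · exact ⟨some v, mem_eliminationBag_of_adj huv.symm hlt, mem_eliminationBag_self v⟩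

end TreeDecomposition

end SimpleGraph

theorem stmt_14 {V : Type} [Fintype V] (G : SimpleGraph V) (k : ℕ)
    -- G is chordal: no induced cycle of length ≥ 4
    (hchordal : ∀ (v : V) (C : G.Walk v v), C.IsCycle → WalkInduced C →
      C.length < 4)
    -- G has no clique on k+1 vertices
    (hfree : G.CliqueFree (k + 1)) :
    -- G has tree-width less than k
    ∃ (ι : Type) (T : SimpleGraph ι) (bag : ι → Finset V),
      IsTreeDecomp G T bag ∧ ∀ i, (bag i).card ≤ k := by
  have hG : G.IsChordal := fun v c hc hcl =>
    hchordal v c hc fun a b ha hb hab => hcl.mem_edges ha hb hab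
  obtain ⟨ord, hord⟩ := hG.exists_isPerfectEliminationOrder
  exact ⟨Option V, G.eliminationTree ord, G.eliminationBag ord, hord.isTreeDecomp,
    fun i => (hord.isClique_eliminationBag i).card_le_of_cliqueFree hfree⟩
end
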